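/- Every Lindelöf scattered regular space is a Hurewicz space. -/

import Mathlib

/-!
Call an open set good if all its closed subsets are Hurewicz. By regularity and the Lindelöf
property, a closed set covered by good open sets is a countable union of closed subsets of good
sets, so the union `W` of all good sets is good. If `W ≠ X`, pick a point `x` isolated in `X \ W`
by an open `U`: a closed `F ⊆ W ∪ U` containing `x` is Hurewicz, because given open covers `𝒰ₙ`
one picks `uₙ ∈ 𝒰ₙ` containing `x`; the points lying in every `uₙ` are covered outright, and the
others lie in one of the countably many Hurewicz sets `F \ uₘ ⊆ W`. Hence `W ∪ U` is good,
contradicting the maximality of `W`.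
-/

/-- A subset `A` of a topological space is scattered if every nonempty subset of `A`
has a point isolated in it. -/
def IsScatteredSet {Z : Type*} [TopologicalSpace Z] (A : Set Z) : Prop :=
  ∀ s ⊆ A, s.Nonempty → ∃ x ∈ s, ∃ U : Set Z, IsOpen U ∧ U ∩ s = {x}

/-- A space is Hurewicz if for every sequence of open covers there are finite
subfamilies such that every point belongs to the union of all but finitely many of them. -/
def IsHurewiczSpace (X : Type*) [TopologicalSpace X] : Prop :=
  ∀ 𝒰 : ℕ → Set (Set X),
    (∀ n, ∀ u ∈ 𝒰 n, IsOpen u) → (∀ n, ⋃₀ 𝒰 n = Set.univ) →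
    ∃ 𝒱 : ℕ → Set (Set X),
      (∀ n, 𝒱 n ⊆ 𝒰 n ∧ (𝒱 n).Finite) ∧
      ∀ x : X, ∀ᶠ n in Filter.atTop, x ∈ ⋃₀ 𝒱 n

open Set Filter Topology

section Selection

variable {X : Type*}

def HasHurewiczSelection (𝒰 : ℕ → Set (Set X)) (A : Set X) : Prop :=
  ∃ 𝒱 : ℕ → Set (Set X), (∀ n, 𝒱 n ⊆ 𝒰 n ∧ (𝒱 n).Finite) ∧
    ∀ x ∈ A, ∀ᶠ n in atTop, x ∈ ⋃₀ 𝒱 n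

variable {𝒰 : ℕ → Set (Set X)}

theorem HasHurewiczSelection.mono {A B : Set X} (hAB : A ⊆ B) (h : HasHurewiczSelection 𝒰 B) :
    HasHurewiczSelection 𝒰 A :=
  let ⟨𝒱, h𝒱, hB⟩ := h
  ⟨𝒱, h𝒱, fun x hx => hB x (hAB hx)⟩

theorem hasHurewiczSelection_iInter {u : ℕ → Set X} (hu : ∀ n, u n ∈ 𝒰 n) :
    HasHurewiczSelection 𝒰 (⋂ n, u n) :=
  ⟨fun n => {u n}, fun n => ⟨singleton_subset_iff.2 (hu n), finite_singleton _⟩,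
    fun _ hx => .of_forall fun n => by simpa using mem_iInter.1 hx n⟩

/-- At stage `n` one uses the selections of the sets `B i` with code `e i ≤ n`. -/
theorem HasHurewiczSelection.iUnion {ι : Type*} [Countable ι] {B : ι → Set X}
    (h : ∀ i, HasHurewiczSelection 𝒰 (B i)) : HasHurewiczSelection 𝒰 (⋃ i, B i) := by
  obtain ⟨e, he⟩ := Countable.exists_injective_nat ι
  choose 𝒱 h𝒱 hB using h
  refine ⟨fun n => ⋃ i ∈ e ⁻¹' Iic n, 𝒱 i n, fun n => ⟨iUnion₂_subset fun i _ => (h𝒱 i n).1, ?_⟩,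
    fun x hx => ?_⟩
  · exact ((finite_Iic n).preimage he.injOn).biUnion fun i _ => (h𝒱 i n).2
  obtain ⟨i, hxi⟩ := mem_iUnion.1 hx
  filter_upwards [hB i x hxi, eventually_ge_atTop (e i)] with n ⟨v, hv, hxv⟩ hn
  exact ⟨v, mem_biUnion (show i ∈ e ⁻¹' Iic n from hn) hv, hxv⟩

theorem HasHurewiczSelection.union {A B : Set X} (hA : HasHurewiczSelection 𝒰 A)
    (hB : HasHurewiczSelection 𝒰 B) : HasHurewiczSelection 𝒰 (A ∪ B) := by
  rw [union_eq_iUnion]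
  exact .iUnion (Bool.forall_bool.2 ⟨hB, hA⟩)

end Selection

section Hurewicz

variable {X : Type*} [TopologicalSpace X]

def IsHurewiczSet (A : Set X) : Prop :=
  ∀ 𝒰 : ℕ → Set (Set X), (∀ n, ∀ u ∈ 𝒰 n, IsOpen u) → (∀ n, A ⊆ ⋃₀ 𝒰 n) →
    HasHurewiczSelection 𝒰 A

theorem isHurewiczSpace_of_isHurewiczSet_univ (h : IsHurewiczSet (univ : Set X)) :
    IsHurewiczSpace X := fun 𝒰 hopen hcov =>
  let ⟨𝒱, h𝒱, hx⟩ := h 𝒰 hopen fun n => (hcov n).ge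
  ⟨𝒱, h𝒱, fun x => hx x trivial⟩

theorem IsHurewiczSet.biUnion {ι : Type*} {I : Set ι} (hI : I.Countable) {B : ι → Set X}
    (h : ∀ i ∈ I, IsHurewiczSet (B i)) : IsHurewiczSet (⋃ i ∈ I, B i) := by
  intro 𝒰 hopen hcov
  have := hI.to_subtype
  rw [biUnion_eq_iUnion] at hcov ⊢
  exact .iUnion fun i => h i i.2 𝒰 hopen fun n => (subset_iUnion _ i).trans (hcov n)

theorem IsLindelof.isHurewiczSet_of_forall_nhds {F : Set X} (hF : IsLindelof F)
    (h : ∀ x ∈ F, ∃ N ∈ 𝓝 x, IsHurewiczSet (F ∩ N)) : IsHurewiczSet F := by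
  choose N hN hFN using h
  obtain ⟨t, htc, hFt⟩ := hF.elim_nhds_subcover' N hN
  have hF_eq : F = ⋃ x ∈ t, F ∩ N x x.2 := by
    refine subset_antisymm (fun y hy => ?_) (iUnion₂_subset fun _ _ => inter_subset_left)
    obtain ⟨x, hx, hyx⟩ := mem_iUnion₂.1 (hFt hy)
    exact mem_iUnion₂.2 ⟨x, hx, hy, hyx⟩
  rw [hF_eq]
  exact .biUnion htc fun x _ => hFN x x.2

theorem isHurewiczSet_of_forall_isOpen_diff {A : Set X} {x : X} (hx : x ∈ A)
    (h : ∀ U, IsOpen U → x ∈ U → IsHurewiczSet (A \ U)) : IsHurewiczSet A := by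
  intro 𝒰 hopen hcov
  choose u hu hxu using fun n => hcov n hx
  have hA : A ⊆ (⋂ n, u n) ∪ ⋃ m, A \ u m := by
    intro y hy
    by_cases hyu : ∀ n, y ∈ u n
    · exact Or.inl (mem_iInter.2 hyu)
    · obtain ⟨m, hm⟩ := not_forall.1 hyu
      exact Or.inr (mem_iUnion.2 ⟨m, hy, hm⟩)
  refine HasHurewiczSelection.mono hA ((hasHurewiczSelection_iInter hu).union
    (.iUnion fun m => ?_))
  exact h (u m) (hopen m _ (hu m)) (hxu m) 𝒰 hopen fun n => sdiff_subset.trans (hcov n)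

def IsClosedHereditarilyHurewicz (U : Set X) : Prop :=
  ∀ F, IsClosed F → F ⊆ U → IsHurewiczSet F

theorem IsClosedHereditarilyHurewicz.mono {U V : Set X} (hUV : U ⊆ V)
    (hV : IsClosedHereditarilyHurewicz V) : IsClosedHereditarilyHurewicz U :=
  fun F hF hFU => hV F hF (hFU.trans hUV)

theorem IsClosedHereditarilyHurewicz.insert {W : Set X} (hW : IsClosedHereditarilyHurewicz W)
    (x : X) : IsClosedHereditarilyHurewicz (insert x W) := by
  intro F hF hFW
  by_cases hxF : x ∈ F
  · refine isHurewiczSet_of_forall_isOpen_diff hxF fun U hU hxU => ?_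
    refine hW _ (hF.sdiff hU) fun y hy => ?_
    rcases hFW hy.1 with rfl | hyW
    · exact absurd hxU hy.2
    · exact hyW
  · exact hW F hF ((subset_insert_iff_of_notMem hxF).1 hFW)

theorem isClosedHereditarilyHurewicz_sUnion [RegularSpace X] [LindelofSpace X]
    {𝒢 : Set (Set X)} (h𝒢 : ∀ G ∈ 𝒢, IsOpen G ∧ IsClosedHereditarilyHurewicz G) :
    IsClosedHereditarilyHurewicz (⋃₀ 𝒢) := by
  intro F hF hF𝒢
  refine hF.isLindelof.isHurewiczSet_of_forall_nhds fun x hx => ?_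
  obtain ⟨G, hG, hxG⟩ := hF𝒢 hx
  obtain ⟨V, hV, hVcl, hVG⟩ := exists_mem_nhds_isClosed_subset ((h𝒢 G hG).1.mem_nhds hxG)
  exact ⟨V, hV, (h𝒢 G hG).2 _ (hF.inter hVcl) (inter_subset_right.trans hVG)⟩

end Hurewicz

theorem IsScatteredSet.induction_on_univ {X : Type*} [TopologicalSpace X]
    (hscat : IsScatteredSet (univ : Set X)) {P : Set X → Prop}
    (hmono : ∀ U V, U ⊆ V → P V → P U)
    (hsUnion : ∀ 𝒢 : Set (Set X), (∀ G ∈ 𝒢, IsOpen G ∧ P G) → P (⋃₀ 𝒢))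
    (hinsert : ∀ x W, IsOpen W → P W → P (insert x W)) : P univ := by
  set W := ⋃₀ {G | IsOpen G ∧ P G}
  have hWopen : IsOpen W := isOpen_sUnion fun G hG => hG.1
  have hW : P W := hsUnion _ fun G hG => hG
  suffices W = univ from this ▸ hW
  by_contra hne
  obtain ⟨x, hxW, U, hU, hUx⟩ :=
    hscat Wᶜ (subset_univ _) (nonempty_compl.2 hne)
  have hWU : W ∪ U ⊆ insert x W := by
    rintro y (hy | hy)
    · exact Or.inr hy
    · by_cases hyW : y ∈ W
      · exact Or.inr hyW
      · exact Or.inl (hUx.subset ⟨hy, hyW⟩)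
  have hxU : x ∈ U := (hUx.superset rfl).1
  have hWU_good : W ∪ U ∈ {G | IsOpen G ∧ P G} :=
    ⟨hWopen.union hU, hmono _ _ hWU (hinsert x W hWopen hW)⟩
  exact hxW (subset_sUnion_of_mem hWU_good (Or.inr hxU))

/-- Every Lindelöf scattered regular space is Hurewicz. -/
theorem hurewicz_of_lindelof_scattered
    {X : Type*} [TopologicalSpace X] [RegularSpace X] [LindelofSpace X]
    (hscat : IsScatteredSet (Set.univ : Set X)) :
    IsHurewiczSpace X := by
  have hgood : IsClosedHereditarilyHurewicz (univ : Set X) :=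
    hscat.induction_on_univ (fun _ _ => IsClosedHereditarilyHurewicz.mono)
      (fun _ => isClosedHereditarilyHurewicz_sUnion) fun _ _ _ hW => hW.insert _
  exact isHurewiczSpace_of_isHurewiczSet_univ (hgood univ isClosed_univ subset_rfl)
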